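/- arXiv:2010.04749 — 3 statements merged into one kernel-verified Lean document; each statement's English description precedes it below -/
import Mathlib

section
/- Parallel composition preserves trace inclusion: if traces(Ei', Ii') ⊆ traces(Ei, Ii) for i ∈ {1,2}, then traces(E1' ∥χ E2', I1' × I2') ⊆ traces(E1 ∥χ E2, I1 × I2). -/
/-- Event systems: labeled transition systems. -/
structure ES (S E : Type) where
  trans : S → E → S → Prop

namespace ES

/-- Extension of the transition relation to finite sequences of events. -/
inductive mtrans {S E : Type} (M : ES S E) : S → List E → S → Prop
  | nil (s : S) : mtrans M s [] s
  | snoc {s s' s'' : S} {τ : List E} {e : E} :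
      mtrans M s τ s' → M.trans s' e s'' → mtrans M s (τ ++ [e]) s''

/-- The traces of an event system starting from a set of initial states. -/
def traces {S E : Type} (M : ES S E) (I : Set S) : Set (List E) :=
  {τ | ∃ s ∈ I, ∃ s', M.mtrans s τ s'}

/-- Traces starting from a single state. -/
def tracesFrom {S E : Type} (M : ES S E) (s : S) : Set (List E) :=
  M.traces {s}

end ES

/-- Parallel composition of event systems modulo a partial synchronization
function `χ : E1 × E2 ⇀ E`. -/
def ES.par {S1 E1 S2 E2 E : Type} (M1 : ES S1 E1) (M2 : ES S2 E2)
    (χ : E1 → E2 → Option E) : ES (S1 × S2) E :=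
  ⟨fun s e s' => ∃ e1 e2, χ e1 e2 = some e ∧ M1.trans s.1 e1 s'.1 ∧ M2.trans s.2 e2 s'.2⟩

/-- Composition of trace sets modulo `χ`. -/
def tcomp {E1 E2 E : Type} (χ : E1 → E2 → Option E)
    (T1 : Set (List E1)) (T2 : Set (List E2)) : Set (List E) :=
  {τ | ∃ τ1 ∈ T1, ∃ τ2 ∈ T2, ∃ h1 : τ1.length = τ.length, ∃ h2 : τ2.length = τ.length,
      ∀ i : Fin τ.length,
        χ (τ1.get (Fin.cast h1.symm i)) (τ2.get (Fin.cast h2.symm i)) = some (τ.get i)}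

/-!
A run of `E1 ∥χ E2` is exactly a pair of runs of the components whose traces are
synchronized position by position by `χ`. Hence the traces of the composition are determined by the
trace sets of the components, monotonically: replacing the traces of `E1'`, `E2'` by larger
sets of traces of `E1`, `E2` still produces every synchronized trace.
-/

/-- Membership of `τ` in `tcomp χ {τ1} {τ2}`, built from the end of the traces as `mtrans` is. -/
inductive Sync {E1 E2 E : Type} (χ : E1 → E2 → Option E) :
    List E1 → List E2 → List E → Prop
  | nil : Sync χ [] [] []
  | snoc {τ1 τ2 τ e1 e2 e} : Sync χ τ1 τ2 τ → χ e1 e2 = some e →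
      Sync χ (τ1 ++ [e1]) (τ2 ++ [e2]) (τ ++ [e])

namespace ES

section mtrans

variable {S E : Type} {M : ES S E}

theorem mtrans_nil_iff {s s' : S} : M.mtrans s [] s' ↔ s' = s := by
  refine ⟨fun h => ?_, by rintro rfl; exact mtrans.nil _⟩
  generalize hτ : ([] : List E) = τ at h
  cases h with
  | nil => rfl
  | snoc => simp at hτ

theorem mtrans_append_singleton_iff {s s'' : S} {τ : List E} {e : E} :
    M.mtrans s (τ ++ [e]) s'' ↔ ∃ s', M.mtrans s τ s' ∧ M.trans s' e s'' := by
  refine ⟨fun h => ?_, fun ⟨_, hm, ht⟩ => hm.snoc ht⟩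
  generalize hτ : τ ++ [e] = τ' at h
  cases h with
  | nil => simp at hτ
  | snoc hm ht =>
    obtain ⟨rfl, he⟩ := List.append_inj' hτ rfl
    cases List.singleton_injective he
    exact ⟨_, hm, ht⟩

end mtrans

section par

variable {S1 E1 S2 E2 E : Type} {M1 : ES S1 E1} {M2 : ES S2 E2} {χ : E1 → E2 → Option E}

theorem mtrans_par_iff {p p' : S1 × S2} {τ : List E} :
    (M1.par M2 χ).mtrans p τ p' ↔
      ∃ τ1 τ2, Sync χ τ1 τ2 τ ∧ M1.mtrans p.1 τ1 p'.1 ∧ M2.mtrans p.2 τ2 p'.2 := by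
  constructor
  · intro h
    induction h with
    | nil => exact ⟨[], [], Sync.nil, mtrans.nil _, mtrans.nil _⟩
    | snoc _ ht ih =>
      obtain ⟨τ1, τ2, hsync, hm1, hm2⟩ := ih
      obtain ⟨e1, e2, hχ, ht1, ht2⟩ := ht
      exact ⟨τ1 ++ [e1], τ2 ++ [e2], hsync.snoc hχ, hm1.snoc ht1, hm2.snoc ht2⟩
  · rintro ⟨τ1, τ2, hsync, hm1, hm2⟩
    induction hsync generalizing p' with
    | nil =>
      obtain rfl : p' = p := Prod.ext (mtrans_nil_iff.mp hm1) (mtrans_nil_iff.mp hm2)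
      exact mtrans.nil p'
    | snoc _ hχ ih =>
      obtain ⟨t1, hm1, ht1⟩ := mtrans_append_singleton_iff.mp hm1
      obtain ⟨t2, hm2, ht2⟩ := mtrans_append_singleton_iff.mp hm2
      exact (ih (p' := (t1, t2)) hm1 hm2).snoc ⟨_, _, hχ, ht1, ht2⟩

theorem traces_par (I1 : Set S1) (I2 : Set S2) :
    (M1.par M2 χ).traces (I1 ×ˢ I2) =
      {τ | ∃ τ1 ∈ M1.traces I1, ∃ τ2 ∈ M2.traces I2, Sync χ τ1 τ2 τ} := by
  ext τ
  simp only [traces, Set.mem_ofPred_eq, mtrans_par_iff, Prod.exists, Set.mem_prod]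
  constructor
  · rintro ⟨s1, s2, ⟨hs1, hs2⟩, t1, t2, τ1, τ2, hsync, hm1, hm2⟩
    exact ⟨τ1, ⟨s1, hs1, t1, hm1⟩, τ2, ⟨s2, hs2, t2, hm2⟩, hsync⟩
  · rintro ⟨τ1, ⟨s1, hs1, t1, hm1⟩, τ2, ⟨s2, hs2, t2, hm2⟩, hsync⟩
    exact ⟨s1, s2, ⟨hs1, hs2⟩, t1, t2, τ1, τ2, hsync, hm1, hm2⟩

end par

end ES

/-- Compositional refinement: parallel composition preserves trace inclusion. -/
theorem compositional_refinement {S1 E1 S2 E2 S1' S2' E : Type}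
    (M1 : ES S1 E1) (M2 : ES S2 E2) (M1' : ES S1' E1) (M2' : ES S2' E2)
    (I1 : Set S1) (I2 : Set S2) (I1' : Set S1') (I2' : Set S2')
    (χ : E1 → E2 → Option E)
    (h1 : M1'.traces I1' ⊆ M1.traces I1) (h2 : M2'.traces I2' ⊆ M2.traces I2) :
    (M1'.par M2' χ).traces (I1' ×ˢ I2') ⊆ (M1.par M2 χ).traces (I1 ×ˢ I2) := by
  rw [ES.traces_par, ES.traces_par]
  rintro τ ⟨τ1, hτ1, τ2, hτ2, hsync⟩
  exact ⟨τ1, h1 hτ1, τ2, h2 hτ2, hsync⟩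
end

section
/- The simulation relation R(P, ho) defined by 'either ho = {token(t)} + h for some place t and heap h with h ⊨ emb(P, t), or ho = ⊥' is a forward simulation from the process operational semantics to the heap transition semantics: if R(P, ho) and P →a P', then there exists ho' with ho →a ho' and R(P', ho'). -/
/-! ## Chunks and heaps -/

/-- Chunks: I/O permissions `bio(t, v, w, t')` and tokens `token(t)`. -/
inductive Chunk (B V Pl : Type) : Type
  | bio (b : B) (t : Pl) (v w : V) (t' : Pl)
  | token (t : Pl)

/-- Heaps are (possibly infinite) multisets of chunks, i.e. functions to `ℕ∞`. -/
abbrev Heap (B V Pl : Type) := Chunk B V Pl → ℕ∞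

open Classical in
/-- The singleton heap containing one chunk. -/
noncomputable def Heap.single {B V Pl : Type} (c : Chunk B V Pl) : Heap B V Pl :=
  fun c' => if c' = c then 1 else 0

/-- Well-typedness of a chunk w.r.t. a typing function `Ty`. -/
def Chunk.wellTyped {B V Pl : Type} (Ty : B → V → Set V) : Chunk B V Pl → Prop
  | .bio b _ v w _ => w ∈ Ty b v
  | .token _ => True

/-! ## Assertions (coinductive, as an M-type) -/

/-- Heads of the assertion functor. -/
inductive AssnHead (B V Pl : Type) : Type
  | bool (b : Bool)
  | chunk (c : Chunk B V Pl)
  | star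
  | exv
  | expl

/-- Arities (branching types) of the assertion functor. -/
def AssnAr (B V Pl : Type) : AssnHead B V Pl → Type
  | .bool _ => Empty
  | .chunk _ => Empty
  | .star => Bool
  | .exv => V
  | .expl => Pl

/-- The assertion polynomial functor. -/
def AssnF (B V Pl : Type) : PFunctor := ⟨AssnHead B V Pl, AssnAr B V Pl⟩

/-- Coinductive separation logic assertions:
`φ ::=ν b | c | φ₁ ⋆ φ₂ | ∃v. φ | ∃t. φ`. -/
def Assn (B V Pl : Type) : Type := (AssnF B V Pl).M

namespace Assn

variable {B V Pl : Type}

/-- Boolean assertion. -/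
def mkBool (b : Bool) : Assn B V Pl := PFunctor.M.mk ⟨.bool b, fun e => e.elim⟩

/-- Chunk assertion. -/
def mkChunk (c : Chunk B V Pl) : Assn B V Pl := PFunctor.M.mk ⟨.chunk c, fun e => e.elim⟩

/-- Separating conjunction. -/
def star (φ ψ : Assn B V Pl) : Assn B V Pl :=
  PFunctor.M.mk ⟨.star, fun x : Bool => if x then φ else ψ⟩

/-- Existential quantification over values. -/
def exv (f : V → Assn B V Pl) : Assn B V Pl := PFunctor.M.mk ⟨.exv, f⟩

/-- Existential quantification over places. -/
def expl (f : Pl → Assn B V Pl) : Assn B V Pl := PFunctor.M.mk ⟨.expl, f⟩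

end Assn

/-- One step of the satisfaction relation. -/
def SatF {B V Pl : Type} (Ty : B → V → Set V)
    (R : Heap B V Pl → Assn B V Pl → Prop) (h : Heap B V Pl) (φ : Assn B V Pl) : Prop :=
  match PFunctor.M.dest φ with
  | ⟨.bool b, _⟩ => b = true
  | ⟨.chunk c, _⟩ => 0 < h c ∧ c.wellTyped Ty
  | ⟨.star, f⟩ => ∃ h1 h2, h = h1 + h2 ∧ R h1 (f true) ∧ R h2 (f false)
  | ⟨.exv, f⟩ => ∃ v, R h (f v)
  | ⟨.expl, f⟩ => ∃ t, R h (f t)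

/-- Coinductive satisfaction relation `h ⊨ φ`, as the greatest fixed point
of `SatF` (defined as the union of all post-fixed points). -/
def sat {B V Pl : Type} (Ty : B → V → Set V) (h : Heap B V Pl) (φ : Assn B V Pl) : Prop :=
  ∃ R, (∀ h' φ', R h' φ' → SatF Ty R h' φ') ∧ R h φ

/-! ## Heap transition system -/

/-- The heap transition system over `Option Heap` (`none` is the chaotic state ⊥),
with rules Bio, Contradict, and Chaos. -/
inductive HTrans {B V Pl : Type} (Ty : B → V → Set V) :
    Option (Heap B V Pl) → B × V × V → Option (Heap B V Pl) → Prop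
  | bio {b : B} {v w : V} {t t' : Pl} {h : Heap B V Pl} :
      w ∈ Ty b v →
      HTrans Ty (some (Heap.single (.token t) + Heap.single (.bio b t v w t') + h)) (b, v, w)
        (some (Heap.single (.token t') + h))
  | contradict {b : B} {v w w' : V} {t t' : Pl} {h : Heap B V Pl} :
      w ≠ w' → w ∈ Ty b v → w' ∈ Ty b v →
      HTrans Ty (some (Heap.single (.token t) + Heap.single (.bio b t v w t') + h)) (b, v, w')
        none
  | chaos {b : B} {v w : V} : w ∈ Ty b v → HTrans Ty none (b, v, w) none

/-- The heap transition system as an event system. -/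
def hES {B V Pl : Type} (Ty : B → V → Set V) : ES (Option (Heap B V Pl)) (B × V × V) :=
  ⟨HTrans Ty⟩

/-- Traces executable in all heaps of a set of heaps. -/
def tracesH {B V Pl : Type} (Ty : B → V → Set V) (H : Set (Heap B V Pl)) :
    Set (List (B × V × V)) :=
  {τ | ∀ h ∈ H, τ ∈ (hES Ty).tracesFrom (some h)}

/-- Traces of an assertion: traces executable in all its heap models. -/
def tracesHA {B V Pl : Type} (Ty : B → V → Set V) (φ : Assn B V Pl) :
    Set (List (B × V × V)) :=
  tracesH Ty {h | sat Ty h φ}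

/-! ## Processes (coinductive, as an M-type) -/

/-- Heads of the process functor. -/
inductive ProcHead (B V : Type) : Type
  | null
  | pre (b : B) (v : V)
  | choice

/-- Arities of the process functor. -/
def ProcAr (B V : Type) : ProcHead B V → Type
  | .null => Empty
  | .pre _ _ => V
  | .choice => Bool

/-- The process polynomial functor. -/
def ProcF (B V : Type) : PFunctor := ⟨ProcHead B V, ProcAr B V⟩

/-- Coinductive processes: `P ::=ν Null | bio(v, z).P | P₁ ⊕ P₂`. -/
def Proc (B V : Type) : Type := (ProcF B V).M

namespace Proc

variable {B V : Type}

/-- The inactive process. -/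
def null : Proc B V := PFunctor.M.mk ⟨.null, fun e => e.elim⟩

/-- Prefixing with an I/O operation, binding the input in the continuation. -/
def pre (b : B) (v : V) (k : V → Proc B V) : Proc B V := PFunctor.M.mk ⟨.pre b v, k⟩

/-- Binary choice. -/
def choice (P Q : Proc B V) : Proc B V :=
  PFunctor.M.mk ⟨.choice, fun x : Bool => if x then P else Q⟩

end Proc

/-- Operational semantics of processes (rules Pref and Choice). -/
inductive PTrans {B V : Type} (Ty : B → V → Set V) : Proc B V → B × V × V → Proc B V → Prop
  | pref {P : Proc B V} {b : B} {v w : V} {k : V → Proc B V} :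
      w ∈ Ty b v → PFunctor.M.dest P = ⟨.pre b v, k⟩ → PTrans Ty P (b, v, w) (k w)
  | chl {P P' : Proc B V} {a : B × V × V} {f : Bool → Proc B V} :
      PFunctor.M.dest P = ⟨.choice, f⟩ → PTrans Ty (f true) a P' → PTrans Ty P a P'
  | chr {P P' : Proc B V} {a : B × V × V} {f : Bool → Proc B V} :
      PFunctor.M.dest P = ⟨.choice, f⟩ → PTrans Ty (f false) a P' → PTrans Ty P a P'

/-- The process operational semantics as an event system. -/
def pES {B V : Type} (Ty : B → V → Set V) : ES (Proc B V) (B × V × V) := ⟨PTrans Ty⟩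

/-- Countable (ℕ-indexed) choice, defined corecursively from binary choice. -/
def vchoice {B V : Type} (f : ℕ → Proc B V) : Proc B V :=
  PFunctor.M.corec
    (fun s : Proc B V ⊕ ℕ =>
      match s with
      | .inl p => ⟨(PFunctor.M.dest p).1, fun x => Sum.inl ((PFunctor.M.dest p).2 x)⟩
      | .inr n => ⟨.choice, fun x : Bool => if x then Sum.inl (f n) else Sum.inr (n + 1)⟩)
    (Sum.inr 0)

/-! ## Embedding of processes into assertions -/

/-- States of the corecursion defining the embedding `emb`. -/
inductive EmbSt (B V Pl : Type) : Type
  | proc (P : Proc B V) (t : Pl)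
  | ex1 (b : B) (v : V) (k : V → Proc B V) (t t' : Pl)
  | star1 (b : B) (v : V) (k : V → Proc B V) (t t' : Pl) (z : V)
  | leafChunk (c : Chunk B V Pl)

/-- One step of the corecursion defining the embedding `emb`. -/
def embStep {B V Pl : Type} : EmbSt B V Pl → (AssnF B V Pl).Obj (EmbSt B V Pl)
  | .proc P t =>
    match PFunctor.M.dest P with
    | ⟨.null, _⟩ => ⟨.bool true, fun e => e.elim⟩
    | ⟨.pre b v, k⟩ => ⟨.expl, fun t' => .ex1 b v k t t'⟩
    | ⟨.choice, f⟩ => ⟨.star, fun x : Bool => .proc (f x) t⟩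
  | .ex1 b v k t t' => ⟨.exv, fun z => .star1 b v k t t' z⟩
  | .star1 b v k t t' z =>
      ⟨.star, fun x : Bool => if x then .leafChunk (.bio b t v z t') else .proc (k z) t'⟩
  | .leafChunk c => ⟨.chunk c, fun e => e.elim⟩

/-- The embedding `emb(P, t)` of a process and a place into an assertion:
`emb(Null, t) = true`, `emb(bio(v,z).P, t) = ∃t',z'. bio(t,v,z',t') ⋆ emb(P[z'/z], t')`,
`emb(P₁ ⊕ P₂, t) = emb(P₁, t) ⋆ emb(P₂, t)`. -/
def embA {B V Pl : Type} (P : Proc B V) (t : Pl) : Assn B V Pl :=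
  PFunctor.M.corec embStep (.proc P t)

/-- The process assertion `emb(P) = ∃t. token(t) ⋆ emb(P, t)`. -/
def procAssn {B V : Type} (Pl : Type) (P : Proc B V) : Assn B V Pl :=
  Assn.expl (fun t => Assn.star (Assn.mkChunk (.token t)) (embA P t))

/-- ℕ-indexed iterated separating conjunction, defined corecursively. -/
def AllStar {B V Pl : Type} (f : ℕ → Assn B V Pl) : Assn B V Pl :=
  PFunctor.M.corec
    (fun s : Assn B V Pl ⊕ ℕ =>
      match s with
      | .inl a => ⟨(PFunctor.M.dest a).1, fun x => Sum.inl ((PFunctor.M.dest a).2 x)⟩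
      | .inr n => ⟨.star, fun x : Bool => if x then Sum.inl (f n) else Sum.inr (n + 1)⟩)
    (Sum.inr 0)

/-! ## I/O-guarded event systems and their translation to processes -/

/-- An I/O-guarded event system: guards depend only on the state and the output,
updates compute the next state from output and input. -/
structure IOGES (B V S : Type) where
  guard : B → V → S → Prop
  update : B → V → V → S → S

/-- The event system associated with an I/O-guarded event system:
`s →bio(v,w) s'` iff the guard holds, `w ∈ Ty(bio, v)`, and `s' = U(s)`. -/
def IOGES.es {B V S : Type} (G : IOGES B V S) (Ty : B → V → Set V) : ES S (B × V × V) :=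
  ⟨fun s a s' => G.guard a.1 a.2.1 s ∧ a.2.2 ∈ Ty a.1 a.2.1 ∧
      s' = G.update a.1 a.2.1 a.2.2 s⟩

/-- States of the corecursion defining `proc(G, s)`. -/
inductive PrSt (S : Type) : Type
  | spine (n : ℕ) (s : S)
  | item (n : ℕ) (s : S)

open Classical in
/-- The corecursive translation `proc(G, s)` of an I/O-guarded event system into
a process: the countable choice over all `bio ∈ Bios` and outputs `v` whose guard
holds in `s` of the prefixed processes `bio(v, z). proc(G, U_{bio(v,z)}(s))`,
via an enumeration `e` of the pairs `(bio, v)`. -/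
noncomputable def procOf {B V S : Type} (e : ℕ → B × V) (G : IOGES B V S) (s : S) :
    Proc B V :=
  PFunctor.M.corec
    (fun st : PrSt S =>
      match st with
      | .spine n s => ⟨.choice, fun x : Bool => if x then .item n s else .spine (n + 1) s⟩
      | .item n s =>
          if G.guard (e n).1 (e n).2 s then
            ⟨.pre (e n).1 (e n).2, fun w => .spine 0 (G.update (e n).1 (e n).2 w s)⟩
          else ⟨.null, fun x => x.elim⟩)
    (.spine 0 s)

/-! ## Canonical heap models -/

open Classical in
/-- The I/O permission (as a singleton heap, or the empty heap) found at position
`pos` of process `P` under input schedule `ρ`, with previous place `pp`,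
current position `cp`, and traversed trace `τ`. -/
noncomputable def pm {B V : Type} (ρ : List (B × V × V) → B → V → V) :
    Proc B V → List (B × V × V) → List Bool → List Bool → List Bool →
      Heap B V (List Bool)
  | P, τ, pp, cp, [] =>
    (match PFunctor.M.dest P with
     | ⟨.pre b v, _⟩ => Heap.single (Chunk.bio b pp v (ρ τ b v) (cp ++ [true]))
     | _ => 0)
  | P, τ, pp, cp, d :: pos =>
    (match PFunctor.M.dest P, d with
     | ⟨.pre b v, k⟩, true =>
         pm ρ (k (ρ τ b v)) (τ ++ [(b, v, ρ τ b v)]) (cp ++ [true]) (cp ++ [true]) pos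
     | ⟨.choice, f⟩, d' => pm ρ (f d') τ pp (cp ++ [d']) pos
     | _, _ => 0)

/-- Pointwise (possibly infinite) sum of a family of heaps. -/
noncomputable def hSum {B V Pl ι : Type} (f : ι → Heap B V Pl) : Heap B V Pl :=
  fun c => ⨆ F : Finset ι, ∑ i ∈ F, f i c

/-- The canonical model construction `gmod(P, ρ, τ, ppos, cpos)`: the multiset
sum of `pm(P, ρ, τ, ppos, cpos, pos)` over all positions `pos`. -/
noncomputable def gmod {B V : Type} (ρ : List (B × V × V) → B → V → V)
    (P : Proc B V) (τ : List (B × V × V)) (pp cp : List Bool) :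
    Heap B V (List Bool) :=
  hSum (fun pos : List Bool => pm ρ P τ pp cp pos)

/-- Well-typedness of an input schedule. -/
def schedWT {B V : Type} (Ty : B → V → Set V) (ρ : List (B × V × V) → B → V → V) : Prop :=
  ∀ τ b v, ρ τ b v ∈ Ty b v

/-- The canonical model `cmod(P, ρ) = gmod(P, ρ, [], [], [])`. -/
noncomputable def cmod {B V : Type} (ρ : List (B × V × V) → B → V → V) (P : Proc B V) :
    Heap B V (List Bool) :=
  gmod ρ P [] [] []

/-- The canonical model with a token added at the previous place. -/
noncomputable def gmodTok {B V : Type} (ρ : List (B × V × V) → B → V → V)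
    (P : Proc B V) (τ : List (B × V × V)) (pp cp : List Bool) :
    Heap B V (List Bool) :=
  Heap.single (Chunk.token pp) + gmod ρ P τ pp cp

/-- The set `can(P)` of token-added canonical models over all well-typed schedules. -/
def canSet {B V : Type} (Ty : B → V → Set V) (P : Proc B V) :
    Set (Heap B V (List Bool)) :=
  {h | ∃ ρ, schedWT Ty ρ ∧ h = Heap.single (Chunk.token []) + cmod ρ P}

/-- The set of source places of I/O permissions in a heap. -/
def srcplaces {B V Pl : Type} (h : Heap B V Pl) : Set Pl :=
  {t | ∃ b v w t', 0 < h (Chunk.bio b t v w t')}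

/-- A heap is dead for a position if it has no tokens and no source place
extending the position. -/
def deadFor {B V : Type} (pos : List Bool) (h : Heap B V (List Bool)) : Prop :=
  (∀ t, h (Chunk.token t) = 0) ∧ ∀ p' ∈ srcplaces h, ¬ pos <+: p'

open Classical in
/-- The witness schedule `ρwit(σ)`: for proper prefixes `τ` of `σ`, return the
input of the next matching action of `σ`; otherwise an arbitrary well-typed value
(given by `pick`). -/
noncomputable def rhoWit {B V : Type} (pick : B → V → V) (σ : List (B × V × V)) :
    List (B × V × V) → B → V → V :=
  fun τ b v =>
    if h : ∃ w, ∃ rest, τ <+: σ ∧ σ.drop τ.length = (b, v, w) :: rest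
    then h.choose
    else pick b v

/-- The simulation relation between processes and heap-transition states:
either the state is a heap with a token at a place `t` plus a model of
`emb(P, t)`, or it is the chaotic state ⊥. -/
def simR {B V Pl : Type} (Ty : B → V → Set V) (P : Proc B V)
    (ho : Option (Heap B V Pl)) : Prop :=
  (∃ (t : Pl) (h : Heap B V Pl),
      ho = some (Heap.single (Chunk.token t) + h) ∧ sat Ty h (embA P t)) ∨
  ho = none

/-!
Induction on the process step. A Choice step is taken by one summand of
`emb(P₁, t) ⋆ emb(P₂, t)`; the heap of the other summand is carried along as a frame, which both
the heap transitions and (affine) satisfaction tolerate. For a Pref step, a model of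
`emb(bio(v, z).P, t)` contains a permission `bio(t, v, z', t')` next to a model of
`emb(P[z'/z], t')`: if the actual input `w` is the predicted `z'`, rule Bio moves the token to
`t'`, otherwise rule Contradict leads to `⊥`. From `⊥`, rule Chaos follows every well-typed step.
-/

theorem PFunctor.M.mk_congr {F : PFunctor} {a : F.A} {f g : F.B a → F.M} (h : ∀ x, f x = g x) :
    PFunctor.M.mk ⟨a, f⟩ = PFunctor.M.mk ⟨a, g⟩ := by
  rw [funext h]

section ForwardSimulation

variable {B V Pl : Type} {Ty : B → V → Set V}

theorem satF_mono {R R' : Heap B V Pl → Assn B V Pl → Prop} (hRR : ∀ h φ, R h φ → R' h φ)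
    {h : Heap B V Pl} {φ : Assn B V Pl} (hs : SatF Ty R h φ) : SatF Ty R' h φ := by
  unfold SatF at *
  generalize PFunctor.M.dest φ = x at hs ⊢
  rcases x with ⟨_ | _ | _ | _ | _, f⟩
  · exact hs
  · exact hs
  · obtain ⟨h1, h2, he, hs1, hs2⟩ := hs
    exact ⟨h1, h2, he, hRR _ _ hs1, hRR _ _ hs2⟩
  · obtain ⟨v, hv⟩ := hs
    exact ⟨v, hRR _ _ hv⟩
  · obtain ⟨t, ht⟩ := hs
    exact ⟨t, hRR _ _ ht⟩

theorem satF_of_sat {h : Heap B V Pl} {φ : Assn B V Pl} (hs : sat Ty h φ) :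
    SatF Ty (sat Ty) h φ := by
  obtain ⟨R, hR, hRh⟩ := hs
  exact satF_mono (fun h' φ' hs' => ⟨R, hR, hs'⟩) (hR _ _ hRh)

theorem sat_add_left {h : Heap B V Pl} {φ : Assn B V Pl} (hs : sat Ty h φ) (hf : Heap B V Pl) :
    sat Ty (hf + h) φ := by
  refine ⟨fun h' φ' => ∃ h₀ hf₀, h' = hf₀ + h₀ ∧ sat Ty h₀ φ', ?_, h, hf, rfl, hs⟩
  rintro _ φ' ⟨h₀, hf₀, rfl, hs₀⟩
  have hs₀ := satF_of_sat hs₀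
  unfold SatF at *
  generalize PFunctor.M.dest φ' = x at hs₀ ⊢
  rcases x with ⟨_ | _ | _ | _ | _, f⟩
  · exact hs₀
  · exact ⟨hs₀.1.trans_le le_add_self, hs₀.2⟩
  · obtain ⟨h1, h2, rfl, hs1, hs2⟩ := hs₀
    exact ⟨hf₀ + h1, h2, (add_assoc _ _ _).symm, ⟨h1, hf₀, rfl, hs1⟩, ⟨h2, 0, (zero_add _).symm, hs2⟩⟩
  · obtain ⟨v, hv⟩ := hs₀
    exact ⟨v, h₀, hf₀, rfl, hv⟩
  · obtain ⟨t, ht⟩ := hs₀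
    exact ⟨t, h₀, hf₀, rfl, ht⟩

theorem exists_sat_of_sat_expl {h : Heap B V Pl} {f : Pl → Assn B V Pl}
    (hs : sat Ty h (Assn.expl f)) : ∃ t, sat Ty h (f t) :=
  satF_of_sat hs

theorem exists_sat_of_sat_exv {h : Heap B V Pl} {f : V → Assn B V Pl}
    (hs : sat Ty h (Assn.exv f)) : ∃ v, sat Ty h (f v) :=
  satF_of_sat hs

theorem exists_add_of_sat_star {h : Heap B V Pl} {φ ψ : Assn B V Pl}
    (hs : sat Ty h (Assn.star φ ψ)) : ∃ h₁ h₂, h = h₁ + h₂ ∧ sat Ty h₁ φ ∧ sat Ty h₂ ψ :=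
  satF_of_sat hs

theorem pos_of_sat_mkChunk {h : Heap B V Pl} {c : Chunk B V Pl}
    (hs : sat Ty h (Assn.mkChunk c)) : 0 < h c ∧ c.wellTyped Ty :=
  satF_of_sat hs

theorem embA_of_dest_eq_pre {P : Proc B V} {b : B} {v : V} {k : V → Proc B V}
    (hd : PFunctor.M.dest P = ⟨.pre b v, k⟩) (t : Pl) :
    embA P t = Assn.expl fun t' => Assn.exv fun z =>
      Assn.star (Assn.mkChunk (.bio b t v z t')) (embA (k z) t') := by
  rw [embA, PFunctor.M.corec_def]
  simp only [embStep, hd]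
  refine PFunctor.M.mk_congr fun t' => ?_
  rw [Function.comp_apply, PFunctor.M.corec_def]
  refine PFunctor.M.mk_congr fun z => ?_
  rw [Function.comp_apply, PFunctor.M.corec_def]
  refine PFunctor.M.mk_congr fun x => ?_
  cases x
  · rfl
  · show PFunctor.M.corec embStep (.leafChunk _) = Assn.mkChunk _
    rw [PFunctor.M.corec_def]
    exact PFunctor.M.mk_congr fun e => e.elim

theorem embA_of_dest_eq_choice {P : Proc B V} {f : Bool → Proc B V}
    (hd : PFunctor.M.dest P = ⟨.choice, f⟩) (t : Pl) :
    embA P t = Assn.star (embA (f true) t) (embA (f false) t) := by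
  rw [embA, PFunctor.M.corec_def]
  simp only [embStep, hd]
  refine PFunctor.M.mk_congr fun x => ?_
  cases x <;> rfl

theorem Heap.exists_eq_single_add {h : Heap B V Pl} {c : Chunk B V Pl} (hc : 0 < h c) :
    ∃ h', h = Heap.single c + h' := by
  classical
  refine ⟨Function.update h c (h c - 1), funext fun c' => ?_⟩
  by_cases hc' : c' = c
  · subst hc'
    simp [Heap.single, add_tsub_cancel_of_le (Order.one_le_iff_ne_zero.mpr hc.ne')]
  · simp [Heap.single, hc']

theorem exists_sat_embA_of_dest_eq_pre {P : Proc B V} {b : B} {v : V} {k : V → Proc B V}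
    (hd : PFunctor.M.dest P = ⟨.pre b v, k⟩) {t : Pl} {h : Heap B V Pl}
    (hs : sat Ty h (embA P t)) :
    ∃ t' z hr, h = Heap.single (.bio b t v z t') + hr ∧ z ∈ Ty b v ∧
      sat Ty hr (embA (k z) t') := by
  rw [embA_of_dest_eq_pre hd] at hs
  obtain ⟨t', hs⟩ := exists_sat_of_sat_expl hs
  obtain ⟨z, hs⟩ := exists_sat_of_sat_exv hs
  obtain ⟨h₁, h₂, rfl, hs₁, hs₂⟩ := exists_add_of_sat_star hs
  obtain ⟨hpos, hz⟩ := pos_of_sat_mkChunk hs₁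
  obtain ⟨h₁', rfl⟩ := Heap.exists_eq_single_add hpos
  exact ⟨t', z, h₁' + h₂, add_assoc _ _ _, hz, sat_add_left hs₂ h₁'⟩

theorem HTrans.add_right {h : Heap B V Pl} {a : B × V × V} {ho : Option (Heap B V Pl)}
    (ht : HTrans Ty (some h) a ho) (hf : Heap B V Pl) :
    HTrans Ty (some (h + hf)) a (ho.map (· + hf)) := by
  cases ht with
  | bio hw => simpa only [add_assoc, Option.map_some] using HTrans.bio (h := _ + hf) hw
  | contradict hne hw hw' =>
    simpa only [add_assoc, Option.map_none] using HTrans.contradict (h := _ + hf) hne hw hw'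

theorem simR_map_add {P : Proc B V} {ho : Option (Heap B V Pl)} (hR : simR Ty P ho)
    (hf : Heap B V Pl) : simR Ty P (ho.map (· + hf)) := by
  rcases hR with ⟨t, h, rfl, hs⟩ | rfl
  · exact Or.inl ⟨t, hf + h, by rw [Option.map_some, add_assoc, add_comm h], sat_add_left hs hf⟩
  · exact Or.inr rfl

theorem exists_htrans_simR_add_right {P' : Proc B V} {t : Pl} {h : Heap B V Pl} {a : B × V × V}
    (hsim : ∃ ho', HTrans Ty (some (Heap.single (.token t) + h)) a ho' ∧ simR Ty P' ho')
    (hf : Heap B V Pl) :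
    ∃ ho', HTrans Ty (some (Heap.single (.token t) + (h + hf))) a ho' ∧ simR Ty P' ho' := by
  obtain ⟨ho', ht, hR⟩ := hsim
  exact ⟨ho'.map (· + hf), by simpa only [add_assoc] using ht.add_right hf, simR_map_add hR hf⟩

theorem PTrans.mem_ty {P P' : Proc B V} {a : B × V × V} (h : PTrans Ty P a P') :
    a.2.2 ∈ Ty a.1 a.2.1 := by
  induction h with
  | pref hw _ => exact hw
  | chl _ _ ih | chr _ _ ih => exact ih

theorem PTrans.exists_htrans_of_sat_embA {P P' : Proc B V} {a : B × V × V}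
    (hstep : PTrans Ty P a P') {t : Pl} {h : Heap B V Pl} (hs : sat Ty h (embA P t)) :
    ∃ ho', HTrans Ty (some (Heap.single (.token t) + h)) a ho' ∧ simR Ty P' ho' := by
  induction hstep generalizing h with
  | @pref P b v w k hw hd =>
    obtain ⟨t', z, hr, rfl, hz, hsr⟩ := exists_sat_embA_of_dest_eq_pre hd hs
    rw [← add_assoc]
    by_cases hzw : z = w
    · subst hzw
      exact ⟨_, HTrans.bio hw, Or.inl ⟨t', hr, rfl, hsr⟩⟩
    · exact ⟨none, HTrans.contradict hzw hz hw, Or.inr rfl⟩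
  | chl hd _ ih =>
    rw [embA_of_dest_eq_choice hd] at hs
    obtain ⟨h₁, h₂, rfl, hs₁, -⟩ := exists_add_of_sat_star hs
    exact exists_htrans_simR_add_right (ih hs₁) h₂
  | chr hd _ ih =>
    rw [embA_of_dest_eq_choice hd] at hs
    obtain ⟨h₁, h₂, rfl, -, hs₂⟩ := exists_add_of_sat_star hs
    rw [add_comm h₁]
    exact exists_htrans_simR_add_right (ih hs₂) h₁

end ForwardSimulation

/-- `simR` is a forward simulation from the process operational semantics to
the heap transition semantics. -/
theorem simR_forward_simulation {B V Pl : Type} (Ty : B → V → Set V)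
    (P P' : Proc B V) (a : B × V × V) (ho : Option (Heap B V Pl))
    (hR : simR Ty P ho) (hstep : PTrans Ty P a P') :
    ∃ ho', HTrans Ty ho a ho' ∧ simR Ty P' ho' := by
  rcases hR with ⟨t, h, rfl, hs⟩ | rfl
  · exact hstep.exists_htrans_of_sat_embA hs
  · exact ⟨none, HTrans.chaos hstep.mem_ty, Or.inr rfl⟩
end

section
/- Canonical models are models of the process assertion: for every process P and well-typed input schedule ρ, the heap cmod(P, ρ) = gmod(P, ρ, [], [], []) satisfies the assertion emb(P, []). -/
/-! Both `gmod` and `emb` unfold along the syntax tree of the process. At a choice node the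
canonical heap splits into the heaps of the two branches (positions starting with `true` resp.
`false`), matching `emb(P₁, t) ⋆ emb(P₂, t)`. At a prefix node `bio(v, z). P` it splits into the
single permission `bio(pp, v, ρ τ bio v, cp ++ [true])` and the canonical heap of the continuation
under the scheduled input, matching `∃t' z. bio(t, v, z, t') ⋆ emb(P[z], t')` with
`t' = cp ++ [true]` and `z = ρ τ bio v`; well-typedness of `ρ` makes that permission well-typed.
So the pairs `(gmod(P, ρ, τ, pp, cp), emb(P, pp))` are closed under unfolding, and coinduction
yields the claim. -/

def List.boolConsEquiv : Unit ⊕ (List Bool ⊕ List Bool) ≃ List Bool where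
  toFun
    | .inl _ => []
    | .inr (.inl p) => true :: p
    | .inr (.inr p) => false :: p
  invFun
    | [] => .inl ()
    | true :: p => .inr (.inl p)
    | false :: p => .inr (.inr p)
  left_inv := by rintro (_ | _ | _) <;> rfl
  right_inv := by rintro (_ | _ | _ | _) <;> rfl

theorem hasSum_list_bool {M : Type*} [AddCommMonoid M] [TopologicalSpace M] [ContinuousAdd M]
    {f : List Bool → M} {a b : M} (ha : HasSum (fun p => f (true :: p)) a)
    (hb : HasSum (fun p => f (false :: p)) b) : HasSum f (f [] + (a + b)) :=
  List.boolConsEquiv.hasSum_iff.1 <|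
    HasSum.sum (f := f ∘ List.boolConsEquiv) (hasSum_unique _) (HasSum.sum ha hb)

section HeapSum

variable {B V Pl ι : Type}

theorem hasSum_hSum_apply (f : ι → Heap B V Pl) (c : Chunk B V Pl) :
    HasSum (fun i => f i c) (hSum f c) :=
  hasSum_of_isLUB _ isLUB_iSup

theorem hSum_zero : hSum (fun _ : ι => (0 : Heap B V Pl)) = 0 := by
  funext c
  simp [hSum]

theorem hSum_list_bool (f : List Bool → Heap B V Pl) :
    hSum f = f [] + (hSum (fun p => f (true :: p)) + hSum (fun p => f (false :: p))) := by
  funext c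
  exact (hasSum_hSum_apply f c).unique
    (hasSum_list_bool (hasSum_hSum_apply _ c) (hasSum_hSum_apply _ c))

end HeapSum

section Gmod

variable {B V : Type} (ρ : List (B × V × V) → B → V → V) {P : Proc B V}
  (τ : List (B × V × V)) (pp cp : List Bool)

theorem gmod_of_choice {f : Bool → Proc B V} (hP : PFunctor.M.dest P = ⟨.choice, f⟩) :
    gmod ρ P τ pp cp
      = gmod ρ (f true) τ pp (cp ++ [true]) + gmod ρ (f false) τ pp (cp ++ [false]) := by
  rw [gmod, hSum_list_bool]
  simp [pm, hP, gmod]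

theorem gmod_of_pre {b : B} {v : V} {k : V → Proc B V} (hP : PFunctor.M.dest P = ⟨.pre b v, k⟩) :
    gmod ρ P τ pp cp
      = Heap.single (.bio b pp v (ρ τ b v) (cp ++ [true]))
        + gmod ρ (k (ρ τ b v)) (τ ++ [(b, v, ρ τ b v)]) (cp ++ [true]) (cp ++ [true]) := by
  rw [gmod, hSum_list_bool]
  simp [pm, hP, gmod, hSum_zero]

end Gmod

section Satisfaction

variable {B V Pl : Type} (Ty : B → V → Set V) (R : Heap B V Pl → Assn B V Pl → Prop)

@[simp] theorem satF_mkBool (h : Heap B V Pl) (b : Bool) :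
    SatF Ty R h (Assn.mkBool b) ↔ b = true := Iff.rfl

@[simp] theorem satF_mkChunk (h : Heap B V Pl) (c : Chunk B V Pl) :
    SatF Ty R h (Assn.mkChunk c) ↔ 0 < h c ∧ c.wellTyped Ty := Iff.rfl

@[simp] theorem satF_star (h : Heap B V Pl) (φ ψ : Assn B V Pl) :
    SatF Ty R h (Assn.star φ ψ) ↔ ∃ h₁ h₂, h = h₁ + h₂ ∧ R h₁ φ ∧ R h₂ ψ := Iff.rfl

@[simp] theorem satF_exv (h : Heap B V Pl) (f : V → Assn B V Pl) :
    SatF Ty R h (Assn.exv f) ↔ ∃ v, R h (f v) := Iff.rfl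

@[simp] theorem satF_expl (h : Heap B V Pl) (f : Pl → Assn B V Pl) :
    SatF Ty R h (Assn.expl f) ↔ ∃ t, R h (f t) := Iff.rfl

inductive SatClosure : Heap B V Pl → Assn B V Pl → Prop
  | base {h φ} : R h φ → SatClosure h φ
  | bool {h} : SatClosure h (Assn.mkBool true)
  | chunk {h c} : 0 < h c → c.wellTyped Ty → SatClosure h (Assn.mkChunk c)
  | star {h₁ h₂ φ ψ} : SatClosure h₁ φ → SatClosure h₂ ψ → SatClosure (h₁ + h₂) (Assn.star φ ψ)
  | exv {h f} (v : V) : SatClosure h (f v) → SatClosure h (Assn.exv f)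
  | expl {h f} (t : Pl) : SatClosure h (f t) → SatClosure h (Assn.expl f)

variable {Ty R}

/-- Coinduction up to the assertion formers: each unfolding step may return to `R` only after a
finite layer of chunks, `⋆` and quantifiers. -/
theorem sat_of_satF_satClosure (hR : ∀ h φ, R h φ → SatF Ty (SatClosure Ty R) h φ)
    {h : Heap B V Pl} {φ : Assn B V Pl} (hφ : R h φ) : sat Ty h φ := by
  refine ⟨SatClosure Ty R, fun h φ hcl => ?_, .base hφ⟩
  cases hcl with
  | base hRhφ => exact hR _ _ hRhφ
  | bool => exact (satF_mkBool ..).2 rfl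
  | chunk hc hwt => exact (satF_mkChunk ..).2 ⟨hc, hwt⟩
  | star h₁ h₂ => exact (satF_star ..).2 ⟨_, _, rfl, h₁, h₂⟩
  | exv v hv => exact (satF_exv ..).2 ⟨v, hv⟩
  | expl t ht => exact (satF_expl ..).2 ⟨t, ht⟩

end Satisfaction

section Embedding

variable {B V Pl : Type} {P : Proc B V} (t : Pl)

theorem embA_of_null {e : Empty → Proc B V} (hP : PFunctor.M.dest P = ⟨.null, e⟩) :
    embA P t = Assn.mkBool true := by
  rw [embA, PFunctor.M.corec_def, embStep, hP]
  simp only [PFunctor.map, Assn.mkBool]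
  congr 2
  funext e
  exact e.elim

theorem embA_of_choice {f : Bool → Proc B V} (hP : PFunctor.M.dest P = ⟨.choice, f⟩) :
    embA P t = Assn.star (embA (f true) t) (embA (f false) t) := by
  rw [embA, PFunctor.M.corec_def, embStep, hP]
  simp only [PFunctor.map, Assn.star]
  congr 2
  funext x
  cases x <;> rfl

theorem corec_embStep_leafChunk (c : Chunk B V Pl) :
    PFunctor.M.corec embStep (.leafChunk c) = Assn.mkChunk c := by
  rw [PFunctor.M.corec_def]
  simp only [embStep, PFunctor.map, Assn.mkChunk]
  congr 2
  funext e
  exact e.elim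

theorem corec_embStep_star1 (b : B) (v : V) (k : V → Proc B V) (t' : Pl) (z : V) :
    PFunctor.M.corec embStep (.star1 b v k t t' z)
      = Assn.star (Assn.mkChunk (.bio b t v z t')) (embA (k z) t') := by
  rw [PFunctor.M.corec_def]
  simp only [embStep, PFunctor.map, Assn.star]
  congr 2
  funext x
  cases x
  · rfl
  · exact corec_embStep_leafChunk _

theorem embA_of_pre {b : B} {v : V} {k : V → Proc B V} (hP : PFunctor.M.dest P = ⟨.pre b v, k⟩) :
    embA P t = Assn.expl fun t' => Assn.exv fun z =>
      Assn.star (Assn.mkChunk (.bio b t v z t')) (embA (k z) t') := by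
  rw [embA, PFunctor.M.corec_def, embStep, hP]
  simp only [PFunctor.map, Assn.expl, Assn.exv]
  congr 2
  funext t'
  rw [Function.comp_apply, PFunctor.M.corec_def]
  simp only [embStep, PFunctor.map]
  congr 2
  funext z
  exact corec_embStep_star1 t b v k t' z

end Embedding

section CanonicalModel

variable {B V : Type} {Ty : B → V → Set V} {ρ : List (B × V × V) → B → V → V}

/-- The relation `X(h, φ)` of the paper. -/
def GmodEmbRel (ρ : List (B × V × V) → B → V → V) :
    Heap B V (List Bool) → Assn B V (List Bool) → Prop :=
  fun h φ => ∃ P τ pp cp, h = gmod ρ P τ pp cp ∧ φ = embA P pp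

theorem satF_satClosure_of_gmodEmbRel (hρ : schedWT Ty ρ) :
    ∀ h φ, GmodEmbRel ρ h φ → SatF Ty (SatClosure Ty (GmodEmbRel ρ)) h φ := by
  rintro _ _ ⟨P, τ, pp, cp, rfl, rfl⟩
  rcases hP : PFunctor.M.dest P with ⟨_ | ⟨b, v⟩ | _, k⟩
  · rw [embA_of_null pp hP, satF_mkBool]
  · rw [embA_of_pre pp hP, gmod_of_pre ρ τ pp cp hP, satF_expl]
    have hchunk : 0 < Heap.single (.bio b pp v (ρ τ b v) (cp ++ [true]))
        (.bio b pp v (ρ τ b v) (cp ++ [true])) := by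
      simp [Heap.single]
    exact ⟨cp ++ [true], .exv (ρ τ b v)
      (.star (.chunk hchunk (hρ τ b v)) (.base ⟨_, _, _, _, rfl, rfl⟩))⟩
  · rw [embA_of_choice pp hP, gmod_of_choice ρ τ pp cp hP, satF_star]
    exact ⟨_, _, rfl, .base ⟨_, _, _, _, rfl, rfl⟩, .base ⟨_, _, _, _, rfl, rfl⟩⟩

end CanonicalModel

/-- Canonical models are models of the process assertion: for every process `P`
and well-typed input schedule `ρ`, the canonical heap `cmod(P, ρ)` satisfies
`emb(P, [])`. -/
theorem cmod_models_emb {B V : Type} (Ty : B → V → Set V)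
    (ρ : List (B × V × V) → B → V → V) (hρ : schedWT Ty ρ) (P : Proc B V) :
    sat Ty (cmod ρ P) (embA P ([] : List Bool)) :=
  sat_of_satF_satClosure (satF_satClosure_of_gmodEmbRel hρ) ⟨P, [], [], [], rfl, rfl⟩
end
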